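/- arXiv:1412.2089 — 6 statements merged into one kernel-verified Lean document; each statement's English description precedes it below -/
import Mathlib

section
/- Let G be a group, A a G-module with no 2-torsion (₂A = 0), and n ≥ 1. If σ : Gⁿ → A is a symmetric n-cochain (invariant under the Σ_{n+1}-action), then σ is normalized: σ(g₁,…,gₙ) = 0 whenever some gᵢ = 1. -/
variable {G A : Type*}

/-- The `i`-th face map used in the group cohomology differential: merge
entries `i` and `i+1` of `g` by multiplication. -/
def coface [Group G] {n : ℕ} (i : Fin n) (g : Fin (n + 1) → G) : Fin n → G :=
  fun j => if (j : ℕ) < (i : ℕ) then g j.castSucc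
           else if j = i then g i.castSucc * g i.succ
           else g j.succ

/-- The standard inhomogeneous group cohomology differential
`∂ⁿ : Cⁿ(G,A) → Cⁿ⁺¹(G,A)`. -/
def diff [Group G] [AddCommGroup A] [DistribMulAction G A] (n : ℕ)
    (σ : (Fin n → G) → A) : (Fin (n + 1) → G) → A :=
  fun g => g 0 • σ (fun j => g j.succ)
    + ∑ i : Fin n, ((-1 : ℤ) ^ ((i : ℕ) + 1)) • σ (coface i g)
    + ((-1 : ℤ) ^ (n + 1)) • σ (fun j => g j.castSucc)

/-- Staic's action of the transposition `(p+1, p+2)` (1-indexed) on `n`-cochains. -/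
def swapAct [Group G] [AddCommGroup A] [DistribMulAction G A] {n : ℕ} (p : Fin n)
    (σ : (Fin n → G) → A) : (Fin n → G) → A :=
  fun g =>
    if (p : ℕ) = 0 then
      -(g p • σ (fun j => if (j : ℕ) = 0 then (g j)⁻¹
                          else if (j : ℕ) = 1 then g p * g j else g j))
    else
      -σ (fun j => if (j : ℕ) + 1 = (p : ℕ) then g j * g p
                   else if j = p then (g j)⁻¹
                   else if (j : ℕ) = (p : ℕ) + 1 then g p * g j else g j)

/-- A symmetric `n`-cochain: one invariant under Staic's `Σ_{n+1}`-action,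
i.e. fixed by each generating transposition. -/
def IsSymmCochain [Group G] [AddCommGroup A] [DistribMulAction G A] {n : ℕ}
    (σ : (Fin n → G) → A) : Prop :=
  ∀ (p : Fin n) (g : Fin n → G), σ g = swapAct p σ g

/-- A normalized cochain: vanishes whenever some argument is `1`. -/
def IsNormalized [Group G] [AddCommGroup A] {n : ℕ} (σ : (Fin n → G) → A) : Prop :=
  ∀ g : Fin n → G, (∃ i, g i = 1) → σ g = 0

/-- The `(∗)` conditions: `σ` vanishes whenever two consecutive arguments are
mutually inverse. -/
def SatisfiesStar [Group G] [AddCommGroup A] {n : ℕ} (σ : (Fin n → G) → A) : Prop :=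
  ∀ (p : ℕ) (hp : p + 1 < n) (g : Fin n → G),
    g ⟨p + 1, hp⟩ = (g ⟨p, Nat.lt_of_succ_lt hp⟩)⁻¹ → σ g = 0

/-! If `gᵢ = 1`, the transposition `(i, i+1)` leaves the arguments `g` unchanged, so it acts on
`σ g` by a plain sign change; a symmetric `σ` therefore has `σ g = -σ g`, and without
2-torsion `σ g = 0`. -/

theorem swapAct_apply_of_eq_one [Group G] [AddCommGroup A] [DistribMulAction G A] {n : ℕ}
    (σ : (Fin n → G) → A) {p : Fin n} {g : Fin n → G} (hg : g p = 1) :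
    swapAct p σ g = -σ g := by
  unfold swapAct
  split_ifs with hp
  · rw [hg, one_smul]
    congr 2
    funext j
    split_ifs with h0 h1
    · rw [show j = p from Fin.ext (h0.trans hp.symm), hg, inv_one]
    · rw [one_mul]
    · rfl
  · congr 2
    funext j
    split_ifs with h0 h1 h2
    · rw [hg, mul_one]
    · rw [h1, hg, inv_one]
    · rw [hg, one_mul]
    · rfl

theorem eq_zero_of_eq_neg_of_noTwoTorsion [AddCommGroup A] (h2 : ∀ a : A, a + a = 0 → a = 0)
    {a : A} (ha : a = -a) : a = 0 :=
  h2 a (by nth_rewrite 1 [ha]; exact neg_add_cancel a)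

theorem isSymmCochain_normalized_general [Group G] [AddCommGroup A] [DistribMulAction G A]
    {n : ℕ} (h2 : ∀ a : A, a + a = 0 → a = 0)
    (σ : (Fin n → G) → A) (hσ : IsSymmCochain σ) :
    IsNormalized σ := by
  rintro g ⟨i, hi⟩
  exact eq_zero_of_eq_neg_of_noTwoTorsion h2 ((hσ i g).trans (swapAct_apply_of_eq_one σ hi))

/-- If `₂A = 0` and `n ≥ 1`, then every symmetric `n`-cochain is normalized:
it vanishes whenever some argument equals `1`. -/
theorem isSymmCochain_normalized [Group G] [AddCommGroup A] [DistribMulAction G A]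
    {n : ℕ} (hn : 1 ≤ n) (h2 : ∀ a : A, a + a = 0 → a = 0)
    (σ : (Fin n → G) → A) (hσ : IsSymmCochain σ) :
    IsNormalized σ :=
  isSymmCochain_normalized_general h2 σ hσ
end

section
/- Let G be a group and A a G-module with ₂A = 0. A 2-cochain σ : G × G → A is a symmetric 2-cocycle if and only if σ is a 2-cocycle (satisfying the usual cocycle condition g₁·σ(g₂,g₃) - σ(g₁g₂,g₃) + σ(g₁,g₂g₃) - σ(g₁,g₂) = 0) which is normalized and satisfies σ(g, g⁻¹) = 0 for all g ∈ G. -/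
/-! In a normalized 2-cocycle the two symmetry relations are instances of the cocycle identity,
at `(g, g⁻¹, g * h)` and at `(g, h, h⁻¹)`, once `σ(g, g⁻¹) = 0`. Conversely, the symmetry
relations at `h = 1` say `σ(g, 1) = -σ(g, 1)` and `σ(1, g) = -σ(1, g)`, which forces
normalization in the absence of 2-torsion, and then `σ(g, g⁻¹) = -σ(1, g) = 0`. -/

theorem eq_zero_of_eq_neg {A : Type*} [AddGroup A] (h2 : ∀ a : A, a + a = 0 → a = 0) {a : A}
    (h : a = -a) : a = 0 :=
  h2 a (by nth_rewrite 2 [h]; exact add_neg_cancel a)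

namespace GroupCochain

variable {G A : Type*} [Group G] [AddCommGroup A]

def IsTwoCocycle [SMul G A] (σ : G → G → A) : Prop :=
  ∀ g₁ g₂ g₃ : G, g₁ • σ g₂ g₃ - σ (g₁ * g₂) g₃ + σ g₁ (g₂ * g₃) - σ g₁ g₂ = 0

def IsLeftSymmetric [SMul G A] (σ : G → G → A) : Prop :=
  ∀ g₁ g₂ : G, σ g₁ g₂ = -(g₁ • σ g₁⁻¹ (g₁ * g₂))

def IsRightSymmetric (σ : G → G → A) : Prop :=
  ∀ g₁ g₂ : G, σ g₁ g₂ = -σ (g₁ * g₂) g₂⁻¹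

variable {σ : G → G → A}

theorem IsLeftSymmetric.map_one_fst [MulAction G A] (hl : IsLeftSymmetric σ)
    (h2 : ∀ a : A, a + a = 0 → a = 0) (g : G) : σ 1 g = 0 :=
  eq_zero_of_eq_neg h2 (by simpa only [inv_one, one_mul, one_smul] using hl 1 g)

theorem IsRightSymmetric.map_one_snd (hr : IsRightSymmetric σ)
    (h2 : ∀ a : A, a + a = 0 → a = 0) (g : G) : σ g 1 = 0 :=
  eq_zero_of_eq_neg h2 (by simpa only [inv_one, mul_one] using hr g 1)

theorem IsRightSymmetric.map_inv (hr : IsRightSymmetric σ) (g : G) : σ g g⁻¹ = -σ 1 g := by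
  simpa only [mul_inv_cancel, inv_inv] using hr g g⁻¹

theorem IsTwoCocycle.isLeftSymmetric [SMul G A] (hc : IsTwoCocycle σ)
    (hone : ∀ g : G, σ 1 g = 0) (hinv : ∀ g : G, σ g g⁻¹ = 0) : IsLeftSymmetric σ := by
  intro g₁ g₂
  have h := hc g₁ g₁⁻¹ (g₁ * g₂)
  rw [mul_inv_cancel, inv_mul_cancel_left, hone, hinv, sub_zero, sub_zero] at h
  exact eq_neg_of_add_eq_zero_left (by rw [add_comm]; exact h)

theorem IsTwoCocycle.isRightSymmetric [DistribMulAction G A] (hc : IsTwoCocycle σ)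
    (hone : ∀ g : G, σ g 1 = 0) (hinv : ∀ g : G, σ g g⁻¹ = 0) : IsRightSymmetric σ := by
  intro g₁ g₂
  have h := hc g₁ g₂ g₂⁻¹
  rw [mul_inv_cancel, hinv, hone, smul_zero, zero_sub, add_zero, sub_eq_zero] at h
  exact h.symm

end GroupCochain

open GroupCochain in
/-- For a `G`-module `A` with `₂A = 0`: a 2-cochain `σ` is a symmetric 2-cocycle
(i.e. a 2-cocycle satisfying `σ(g₁,g₂) = -g₁ • σ(g₁⁻¹, g₁g₂)` and
`σ(g₁,g₂) = -σ(g₁g₂, g₂⁻¹)`) if and only if it is a normalized 2-cocycle with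
`σ(g, g⁻¹) = 0` for all `g`. -/
theorem symmetric_two_cocycle_iff {G A : Type*} [Group G] [AddCommGroup A]
    [DistribMulAction G A] (h2 : ∀ a : A, a + a = 0 → a = 0) (σ : G → G → A) :
    ((∀ g₁ g₂ : G, σ g₁ g₂ = -(g₁ • σ g₁⁻¹ (g₁ * g₂))) ∧
     (∀ g₁ g₂ : G, σ g₁ g₂ = -σ (g₁ * g₂) g₂⁻¹) ∧
     (∀ g₁ g₂ g₃ : G, g₁ • σ g₂ g₃ - σ (g₁ * g₂) g₃ + σ g₁ (g₂ * g₃) - σ g₁ g₂ = 0)) ↔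
    ((∀ g₁ g₂ g₃ : G, g₁ • σ g₂ g₃ - σ (g₁ * g₂) g₃ + σ g₁ (g₂ * g₃) - σ g₁ g₂ = 0) ∧
     (∀ g : G, σ g 1 = 0 ∧ σ 1 g = 0) ∧
     (∀ g : G, σ g g⁻¹ = 0)) := by
  constructor
  · rintro ⟨hl, hr, hc⟩
    have hone_fst : ∀ g : G, σ 1 g = 0 := IsLeftSymmetric.map_one_fst hl h2
    refine ⟨hc, fun g => ⟨IsRightSymmetric.map_one_snd hr h2 g, hone_fst g⟩, fun g => ?_⟩
    rw [IsRightSymmetric.map_inv hr, hone_fst, neg_zero]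
  · rintro ⟨hc, hone, hinv⟩
    exact ⟨IsTwoCocycle.isLeftSymmetric hc (fun g => (hone g).2) hinv,
      IsTwoCocycle.isRightSymmetric hc (fun g => (hone g).1) hinv, hc⟩
end

section
/- Let G be a group, A a G-module with ₂A = 0, and n ≥ 1. A map σ : Gⁿ → A is a symmetric n-cocycle if and only if σ is a normalized n-cocycle satisfying the (∗) conditions: σ(g₁, g₁⁻¹, g₃,…,gₙ) = 0; σ(g₁,…,g_{i-1}, gᵢ, gᵢ⁻¹, g_{i+2},…,gₙ) = 0 for 1 < i < n; and σ(g₁,…,g_{n-2}, gₙ, gₙ⁻¹) = 0, for all g₁,…,gₙ ∈ G. -/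
variable {G A : Type*}

/-!
Under a transposition whose slot holds `1`, a symmetric cochain just changes sign, so it vanishes
there when `₂A = 0`; the transposition at slot `p + 1` turns a pair `gₚ, gₚ⁻¹` into such a slot,
which gives `(∗)`.

Conversely, evaluate the cocycle identity at `(g₀, …, gₚ, gₚ⁻¹, gₚ gₚ₊₁, gₚ₊₂, …, gₙ₋₁)`. Every
face except the `p`-th and the `(p+2)`-th still contains an entry `1` or two consecutive mutually
inverse entries, so it vanishes; those two faces are `-(swapAct p σ g)` and `σ g`, with equal signs.
-/

section Symmetric
variable [Group G] [AddCommGroup A] [DistribMulAction G A] {n : ℕ} {σ : (Fin n → G) → A}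

theorem swapAct_of_eq_one {p : Fin n} {g : Fin n → G} (hp : g p = 1) :
    swapAct p σ g = -σ g := by
  simp only [swapAct]
  split_ifs with h0
  · rw [hp, one_smul]
    congr 2
    funext j
    split_ifs with hj
    · obtain rfl : j = p := Fin.ext (by omega)
      simp [hp]
    · exact one_mul _
    · rfl
  · congr 2
    funext j
    split_ifs with _ hj
    · rw [hp, mul_one]
    · rw [hj, hp, inv_one]
    · rw [hp, one_mul]
    · rfl

theorem IsSymmCochain.isNormalized (h2 : ∀ a : A, a + a = 0 → a = 0) (hsym : IsSymmCochain σ) :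
    IsNormalized σ := by
  rintro g ⟨p, hp⟩
  have h := hsym p g
  rw [swapAct_of_eq_one hp, eq_neg_iff_add_eq_zero] at h
  exact h2 _ h

theorem IsSymmCochain.satisfiesStar (hsym : IsSymmCochain σ) (hN : IsNormalized σ) :
    SatisfiesStar σ := by
  intro p hp g hg
  rw [hsym ⟨p + 1, hp⟩ g, swapAct, if_neg (Nat.succ_ne_zero p),
    hN _ ⟨⟨p, Nat.lt_of_succ_lt hp⟩, by simp [hg]⟩, neg_zero]

end Symmetric

-- Tuples are handled as `ℕ`-indexed sequences, so that index arithmetic needs no bounds proofs.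
section Sequences
variable [Group G] {n : ℕ}

def seqOf (g : Fin n → G) : ℕ → G := fun k => if hk : k < n then g ⟨k, hk⟩ else 1

def mergeAt (i : ℕ) (f : ℕ → G) : ℕ → G :=
  fun k => if k < i then f k else if k = i then f i * f (i + 1) else f (k + 1)

def insertInv (f : ℕ → G) (q : ℕ) : ℕ → G :=
  fun k => if k ≤ q then f k else if k = q + 1 then (f q)⁻¹
    else if k = q + 2 then f q * f (q + 1) else f (k - 1)

@[simp] theorem seqOf_val (g : Fin n → G) (j : Fin n) : seqOf g j = g j := dif_pos j.isLt

theorem mergeAt_of_lt {i k : ℕ} (f : ℕ → G) (h : k < i) : mergeAt i f k = f k := if_pos h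

theorem mergeAt_self (i : ℕ) (f : ℕ → G) : mergeAt i f i = f i * f (i + 1) := by
  simp [mergeAt]

theorem mergeAt_of_gt {i k : ℕ} (f : ℕ → G) (h : i < k) : mergeAt i f k = f (k + 1) := by
  simp [mergeAt, h.not_gt, h.ne']

theorem coface_eq_mergeAt (i : Fin n) (f : ℕ → G) :
    coface i (fun j : Fin (n + 1) => f j) = fun k : Fin n => mergeAt i f k := by
  funext k
  simp only [coface, mergeAt, Fin.ext_iff, Fin.val_castSucc, Fin.val_succ]

theorem insertInv_succ (f : ℕ → G) (q : ℕ) : insertInv f q (q + 1) = (insertInv f q q)⁻¹ := by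
  simp [insertInv]

theorem mergeAt_succ_insertInv (f : ℕ → G) (q : ℕ) : mergeAt (q + 1) (insertInv f q) = f := by
  funext k
  simp only [mergeAt, insertInv]
  split_ifs <;> first | omega | (subst_vars; simp)

end Sequences

section Conditions
variable [Group G] [AddCommGroup A] {n : ℕ} {σ : (Fin n → G) → A}

theorem IsNormalized.apply_seq (hN : IsNormalized σ) {f : ℕ → G} {q : ℕ} (hq : q < n)
    (hf : f q = 1) : σ (fun k : Fin n => f k) = 0 :=
  hN _ ⟨⟨q, hq⟩, hf⟩

theorem SatisfiesStar.apply_seq (hS : SatisfiesStar σ) {f : ℕ → G} {q : ℕ} (hq : q + 1 < n)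
    (hf : f (q + 1) = (f q)⁻¹) : σ (fun k : Fin n => f k) = 0 :=
  hS q hq _ hf

end Conditions

section Faces
variable [Group G] [AddCommGroup A] [DistribMulAction G A] {n : ℕ} {σ : (Fin n → G) → A}

/-- The faces of `(f 0, …, f n)` in the cocycle identity; the last one, dropping `f n`, is
`face σ f (n + 1)` because `mergeAt n f` agrees with `f` below `n`. -/
def face (σ : (Fin n → G) → A) (f : ℕ → G) : ℕ → A
  | 0 => f 0 • σ (fun k => f (k + 1))
  | j + 1 => σ (fun k => mergeAt j f k)

theorem diff_eq_sum_face (f : ℕ → G) :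
    diff n σ (fun j => f j) = ∑ j ∈ Finset.range (n + 2), ((-1 : ℤ) ^ j) • face σ f j := by
  have hlast : (fun k : Fin n => mergeAt n f k) = fun k : Fin n => f k :=
    funext fun k => mergeAt_of_lt f k.isLt
  rw [Finset.sum_range_succ', Finset.sum_range_succ, ← Fin.sum_univ_eq_sum_range]
  simp only [diff, face, coface_eq_mergeAt, hlast, Fin.val_succ, Fin.val_castSucc, Fin.val_zero,
    pow_zero, one_smul]
  abel

theorem face_eq_zero (hN : IsNormalized σ) (hS : SatisfiesStar σ) {f : ℕ → G} {q j : ℕ}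
    (hq : q < n) (hf : f (q + 1) = (f q)⁻¹) (hj : j < n + 2) (hjq : j ≠ q) (hjq' : j ≠ q + 2) :
    face σ f j = 0 := by
  cases j with
  | zero =>
    obtain ⟨q, rfl⟩ : ∃ r, q = r + 1 := ⟨q - 1, by omega⟩
    rw [face, hS.apply_seq (f := fun k => f (k + 1)) (by omega) hf, smul_zero]
  | succ i =>
    rcases lt_trichotomy i q with hi | rfl | hi
    · obtain ⟨q, rfl⟩ : ∃ r, q = r + 1 := ⟨q - 1, by omega⟩
      exact hS.apply_seq (q := q) (by omega)
        (by rw [mergeAt_of_gt f (by omega), mergeAt_of_gt f (by omega), hf])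
    · exact hN.apply_seq hq (by rw [mergeAt_self, hf, mul_inv_cancel])
    · exact hS.apply_seq (q := q) (by omega)
        (by rw [mergeAt_of_lt f hi, mergeAt_of_lt f (by omega), hf])

theorem face_insertInv_add_two (f : ℕ → G) (q : ℕ) :
    face σ (insertInv f q) (q + 2) = σ (fun k => f k) := by
  rw [face, mergeAt_succ_insertInv]

theorem swapAct_eq_neg_face (p : Fin n) (g : Fin n → G) :
    swapAct p σ g = -face σ (insertInv (seqOf g) p) p := by
  obtain ⟨_ | q, hq⟩ := p
  · simp only [swapAct, face, if_true]
    congr 2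
    · exact (seqOf_val g ⟨0, hq⟩).symm
    · congr 1
      funext ⟨k, hk⟩
      simp only [← seqOf_val g, insertInv]
      split_ifs <;> first | omega | (subst_vars; simp)
  · simp only [swapAct, face, Nat.succ_ne_zero, if_false]
    congr 2
    funext ⟨k, hk⟩
    simp only [← seqOf_val g, insertInv, mergeAt, Fin.ext_iff]
    split_ifs <;> first | omega | (subst_vars; simp)

theorem diff_eq_face_add_face (hN : IsNormalized σ) (hS : SatisfiesStar σ) {f : ℕ → G} {q : ℕ}
    (hq : q < n) (hf : f (q + 1) = (f q)⁻¹) :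
    diff n σ (fun j => f j) = ((-1 : ℤ) ^ q) • (face σ f q + face σ f (q + 2)) := by
  rw [diff_eq_sum_face, Finset.sum_eq_add_of_mem q (q + 2) (by simp; omega) (by simp; omega)
    (by omega), smul_add, pow_add, neg_one_sq, mul_one]
  rintro j hj ⟨hjq, hjq'⟩
  rw [face_eq_zero hN hS hq hf (Finset.mem_range.1 hj) hjq hjq', smul_zero]

theorem IsSymmCochain.of_diff_eq_zero (hd : diff n σ = 0) (hN : IsNormalized σ)
    (hS : SatisfiesStar σ) : IsSymmCochain σ := by
  intro p g
  have hf := insertInv_succ (seqOf g) p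
  have h := diff_eq_face_add_face hN hS p.isLt hf
  rw [hd, Pi.zero_apply, face_insertInv_add_two, funext (seqOf_val g), ← neg_neg (face σ _ _),
    ← swapAct_eq_neg_face, eq_comm, ((isUnit_neg_one).pow _).smul_eq_zero] at h
  exact (neg_add_eq_zero.1 h).symm

end Faces

theorem symmetric_cocycle_iff_normalized_star_general [Group G] [AddCommGroup A]
    [DistribMulAction G A] {n : ℕ}
    (h2 : ∀ a : A, a + a = 0 → a = 0) (σ : (Fin n → G) → A) :
    (IsSymmCochain σ ∧ diff n σ = 0) ↔
      (diff n σ = 0 ∧ IsNormalized σ ∧ SatisfiesStar σ) := by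
  constructor
  · rintro ⟨hsym, hd⟩
    have hN := hsym.isNormalized h2
    exact ⟨hd, hN, hsym.satisfiesStar hN⟩
  · rintro ⟨hd, hN, hS⟩
    exact ⟨.of_diff_eq_zero hd hN hS, hd⟩

/-- For `₂A = 0` and `n ≥ 1`: a map `σ : Gⁿ → A` is a symmetric `n`-cocycle if
and only if it is a normalized `n`-cocycle satisfying the `(∗)` conditions. -/
theorem symmetric_cocycle_iff_normalized_star [Group G] [AddCommGroup A]
    [DistribMulAction G A] {n : ℕ} (hn : 1 ≤ n)
    (h2 : ∀ a : A, a + a = 0 → a = 0) (σ : (Fin n → G) → A) :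
    (IsSymmCochain σ ∧ diff n σ = 0) ↔
      (diff n σ = 0 ∧ IsNormalized σ ∧ SatisfiesStar σ) :=
  symmetric_cocycle_iff_normalized_star_general h2 σ
end

section
/- Let G be a group, A a G-module with ₂A = 0. A 2-cochain σ : G² → A is a symmetric 2-coboundary if and only if σ = ∂¹β for some β : G → A with β(1) = 0 and σ(g, g⁻¹) = 0 for all g ∈ G. -/
/-!
Symmetry of `β` at `g = 1` says `β 1 = -β 1`, so `β 1 = 0` when `A` has no 2-torsion. Once
`β 1 = 0`, the value `∂¹β(g, g⁻¹) = g • β g⁻¹ + β g` vanishes exactly when `β` is symmetric at `g`.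
-/

section SymmetricCochain

variable {G A : Type*} [Group G] [AddCommGroup A] [DistribMulAction G A]

lemma map_one_eq_zero_of_symmetric (h2 : ∀ a : A, a + a = 0 → a = 0) {β : G → A}
    (hβ : ∀ g : G, β g = -(g • β g⁻¹)) : β 1 = 0 := by
  apply h2
  have h := hβ 1
  rw [inv_one, one_smul] at h
  rw [← eq_neg_iff_add_eq_zero]
  exact h

lemma coboundary_apply_inv {β : G → A} (hβ1 : β 1 = 0) (g : G) :
    g • β g⁻¹ - β (g * g⁻¹) + β g = g • β g⁻¹ + β g := by
  rw [mul_inv_cancel, hβ1, sub_zero]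

lemma symmetric_iff_coboundary_apply_inv_eq_zero {β : G → A} (hβ1 : β 1 = 0) :
    (∀ g : G, β g = -(g • β g⁻¹)) ↔ ∀ g : G, g • β g⁻¹ - β (g * g⁻¹) + β g = 0 := by
  simp only [coboundary_apply_inv hβ1, ← neg_eq_iff_add_eq_zero, eq_comm]

end SymmetricCochain

/-- For a `G`-module `A` with `₂A = 0`: a 2-cochain `σ` is a symmetric
2-coboundary (i.e. `σ = ∂¹β` for a symmetric 1-cochain `β`, one with
`β(g) = -g • β(g⁻¹)`) if and only if `σ = ∂¹β` for some `β` with `β(1) = 0` and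
`σ(g, g⁻¹) = 0` for all `g ∈ G`.  Here `∂¹β(g₁,g₂) = g₁•β(g₂) - β(g₁g₂) + β(g₁)`. -/
theorem symmetric_two_coboundary_iff {G A : Type*} [Group G] [AddCommGroup A]
    [DistribMulAction G A] (h2 : ∀ a : A, a + a = 0 → a = 0) (σ : G → G → A) :
    (∃ β : G → A, (∀ g : G, β g = -(g • β g⁻¹)) ∧
        ∀ g₁ g₂ : G, σ g₁ g₂ = g₁ • β g₂ - β (g₁ * g₂) + β g₁) ↔
    ((∃ β : G → A, β 1 = 0 ∧
        ∀ g₁ g₂ : G, σ g₁ g₂ = g₁ • β g₂ - β (g₁ * g₂) + β g₁) ∧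
      ∀ g : G, σ g g⁻¹ = 0) := by
  constructor
  · rintro ⟨β, hsym, hcob⟩
    have hβ1 := map_one_eq_zero_of_symmetric h2 hsym
    refine ⟨⟨β, hβ1, hcob⟩, fun g => ?_⟩
    rw [hcob]
    exact (symmetric_iff_coboundary_apply_inv_eq_zero hβ1).1 hsym g
  · rintro ⟨⟨β, hβ1, hcob⟩, hdiag⟩
    refine ⟨β, (symmetric_iff_coboundary_apply_inv_eq_zero hβ1).2 fun g => ?_, hcob⟩
    rw [← hcob]
    exact hdiag g
end

section
/- Let G be a group, H a subgroup of finite index, A a G-module, and fix coset representatives c̄ for each c ∈ G/H with H̄ = 1. If σ : Hⁿ → A is a symmetric n-cochain, then the transfer tr_H^G(σ) : Gⁿ → A defined by tr_H^G(σ)(g₁,…,gₙ) = Σ_{c ∈ G/H} (x₁c)‾ · σ((x₁c)‾⁻¹ g₁ (x₂c)‾, …, (xₙc)‾⁻¹ gₙ c̄), where xᵢ = gᵢ⋯gₙ, is a symmetric n-cochain on G. -/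
variable {G A : Type*}

def prodFrom {G : Type*} [Group G] {n : ℕ} (g : Fin n → G) (i : ℕ) : G :=
  ((List.ofFn g).drop i).prod

theorem prodFrom_succ {G : Type*} [Group G] {n : ℕ} (g : Fin n → G) (i : ℕ)
    (h : i < n) : prodFrom g i = g ⟨i, h⟩ * prodFrom g (i + 1) := by
  unfold prodFrom
  rw [List.drop_eq_getElem_cons (by simpa using h), List.prod_cons]
  simp

def transferCochain {G A : Type*} [Group G] [AddCommGroup A] [DistribMulAction G A]
    (H : Subgroup G) [Fintype (G ⧸ H)] (rep : G ⧸ H → G)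
    (hrep : ∀ c : G ⧸ H, (QuotientGroup.mk (rep c) : G ⧸ H) = c)
    {n : ℕ} (σ : (Fin n → H) → A) : (Fin n → G) → A :=
  fun g => ∑ c : G ⧸ H,
    rep (prodFrom g 0 • c) •
      σ (fun i =>
        ⟨(rep (prodFrom g (i : ℕ) • c))⁻¹ * g i * rep (prodFrom g ((i : ℕ) + 1) • c), by
          have h1 : (QuotientGroup.mk (rep (prodFrom g (i : ℕ) • c)) : G ⧸ H)
              = prodFrom g (i : ℕ) • c := hrep _
          have h2 : (QuotientGroup.mk (g i * rep (prodFrom g ((i : ℕ) + 1) • c)) : G ⧸ H)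
              = prodFrom g (i : ℕ) • c := by
            calc (QuotientGroup.mk (g i * rep (prodFrom g ((i : ℕ) + 1) • c)) : G ⧸ H)
                = g i • (QuotientGroup.mk (rep (prodFrom g ((i : ℕ) + 1) • c))) := rfl
              _ = g i • (prodFrom g ((i : ℕ) + 1) • c) := by rw [hrep _]
              _ = prodFrom g (i : ℕ) • c := by
                  rw [← mul_smul, ← prodFrom_succ g (i : ℕ) i.isLt]
          have h3 := QuotientGroup.eq.mp (h1.trans h2.symm)
          simpa [mul_assoc] using h3⟩)

/-!
Write a tuple `g` through its suffix products `x i = g i * ⋯ * g (n - 1)`, so that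
`g i = x i * (x (i + 1))⁻¹`. In these coordinates Staic's generator `(p + 1, p + 2)` just swaps
`x p` and `x (p + 1)`, up to a right translation of all `x i`. Hence `g ↦ x 0 • Φ x` is a
symmetric cochain as soon as `Φ` changes sign under adjacent swaps and `Φ (x * k) = k⁻¹ • Φ x`.

The transfer has this shape: with `v i = (rep (x i • c))⁻¹ * x i`, its `c`-summand is
`x 0 • (v 0)⁻¹ • σ (fun i => v i * (v (i + 1))⁻¹)`. The sum `Φ x` of the `(v 0)⁻¹ • σ (…)`
changes sign summand by summand because `σ` (extended by zero off `Hⁿ`) is symmetric, and a right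
translation by `k` only reindexes the sum over `G ⧸ H` by `c ↦ k • c`.
-/

section

variable [Group G] {n : ℕ}

def swapArgs (p : Fin n) (g : Fin n → G) : Fin n → G :=
  fun j => if (j : ℕ) + 1 = (p : ℕ) then g j * g p
           else if j = p then (g j)⁻¹
           else if (j : ℕ) = (p : ℕ) + 1 then g p * g j else g j

theorem map_swapArgs {G' : Type*} [Group G'] (f : G →* G') (p : Fin n) (g : Fin n → G) :
    f ∘ swapArgs p g = swapArgs p (f ∘ g) := by
  funext j
  simp only [swapArgs, Function.comp_apply]
  split_ifs <;> simp

def diffs (x : Fin (n + 1) → G) : Fin n → G :=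
  fun i => x i.castSucc * (x i.succ)⁻¹

theorem swapArgs_diffs (p : Fin n) (x : Fin (n + 1) → G) :
    swapArgs p (diffs x) = diffs (x ∘ Equiv.swap p.castSucc p.succ) := by
  funext j
  simp only [swapArgs, diffs, Function.comp_apply]
  split_ifs with h1 h2 h3
  · have : j.castSucc ≠ p.castSucc := by simp [Fin.ext_iff]; omega
    have : j.castSucc ≠ p.succ := by simp [Fin.ext_iff]; omega
    have : j.succ = p.castSucc := by simp [Fin.ext_iff]; omega
    simp [Equiv.swap_apply_of_ne_of_ne, *]
  · subst h2; simp
  · have : j.castSucc = p.succ := by simp [Fin.ext_iff]; omega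
    have : j.succ ≠ p.castSucc := by simp [Fin.ext_iff]; omega
    have : j.succ ≠ p.succ := by simp [Fin.ext_iff]; omega
    simp [Equiv.swap_apply_of_ne_of_ne, *]
  · have h2 : (j : ℕ) ≠ p := fun h => h2 (Fin.ext h)
    rw [Equiv.swap_apply_of_ne_of_ne, Equiv.swap_apply_of_ne_of_ne] <;>
      simp [Fin.ext_iff] <;> omega

theorem swap_castSucc_succ_zero_of_ne_zero {p : Fin n} (hp : (p : ℕ) ≠ 0) :
    Equiv.swap p.castSucc p.succ 0 = 0 :=
  Equiv.swap_apply_of_ne_of_ne (by simp [Fin.ext_iff]; omega) (by simp [Fin.ext_iff])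

theorem diffs_mul_right (x : Fin (n + 1) → G) (k : G) :
    diffs (fun i => x i * k) = diffs x := by
  funext i
  simp [diffs, mul_assoc]

def suffixProd (g : Fin n → G) : Fin (n + 1) → G := fun i => prodFrom g i

theorem diffs_suffixProd (g : Fin n → G) : diffs (suffixProd g) = g := by
  funext i
  simp [diffs, suffixProd, prodFrom_succ g i i.isLt]

theorem suffixProd_diffs (x : Fin (n + 1) → G) :
    suffixProd (diffs x) = fun i => x i * (x (Fin.last n))⁻¹ := by
  funext i
  induction i using Fin.reverseInduction with
  | last => simp [suffixProd, prodFrom, List.drop_eq_nil_of_le]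
  | cast i ih =>
    simp only [suffixProd, Fin.val_castSucc] at ih ⊢
    rw [prodFrom_succ _ i i.isLt, ← Fin.val_succ, ih]
    simp [diffs]

theorem swapArgs_swapArgs (p : Fin n) (g : Fin n → G) : swapArgs p (swapArgs p g) = g := by
  obtain ⟨x, rfl⟩ : ∃ x, diffs x = g := ⟨suffixProd g, diffs_suffixProd g⟩
  simp only [swapArgs_diffs, Function.comp_def, Equiv.swap_apply_self]

theorem swapArgs_coe (H : Subgroup G) (p : Fin n) (h : Fin n → H) :
    swapArgs p (fun i => (h i : G)) = fun i => ((swapArgs p h i : H) : G) :=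
  (map_swapArgs H.subtype p h).symm

theorem swapArgs_mem {H : Subgroup G} {g : Fin n → G} (hg : ∀ i, g i ∈ H) (p : Fin n) :
    ∀ i, swapArgs p g i ∈ H := by
  lift g to Fin n → H using hg
  simp [swapArgs_coe]

open Classical in
noncomputable def extendByZero [AddCommGroup A] (H : Subgroup G) (σ : (Fin n → H) → A) :
    (Fin n → G) → A :=
  fun g => if h : ∀ i, g i ∈ H then σ (fun i => ⟨g i, h i⟩) else 0

theorem extendByZero_coe [AddCommGroup A] (H : Subgroup G) (σ : (Fin n → H) → A)
    (h : Fin n → H) : extendByZero H σ (fun i => (h i : G)) = σ h := by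
  simp [extendByZero]

theorem extendByZero_eq_zero [AddCommGroup A] {H : Subgroup G} (σ : (Fin n → H) → A)
    {g : Fin n → G} (hg : ¬∀ i, g i ∈ H) : extendByZero H σ g = 0 :=
  dif_neg hg

variable [AddCommGroup A] [DistribMulAction G A]

theorem swapAct_of_eq_zero {p : Fin n} (hp : (p : ℕ) = 0) (σ : (Fin n → G) → A)
    (g : Fin n → G) : swapAct p σ g = -(g p • σ (swapArgs p g)) := by
  simp only [swapAct, if_pos hp]
  congr 3
  funext j
  simp [swapArgs, hp, Fin.ext_iff]

theorem swapAct_of_ne_zero {p : Fin n} (hp : (p : ℕ) ≠ 0) (σ : (Fin n → G) → A)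
    (g : Fin n → G) : swapAct p σ g = -σ (swapArgs p g) := by
  simp only [swapAct, if_neg hp]
  rfl

theorem isSymmCochain_of_diffs (Φ : (Fin (n + 1) → G) → A)
    (hΦ : ∀ (p : Fin n) x, Φ (x ∘ Equiv.swap p.castSucc p.succ) = -Φ x)
    (T : (Fin n → G) → A) (hT : ∀ x, T (diffs x) = x 0 • Φ x) : IsSymmCochain T := by
  intro p g
  obtain ⟨x, rfl⟩ : ∃ x, diffs x = g := ⟨suffixProd g, diffs_suffixProd g⟩
  by_cases hp : (p : ℕ) = 0
  · have h0 : (0 : Fin (n + 1)) = p.castSucc := Fin.ext (by simp [hp])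
    rw [swapAct_of_eq_zero hp, swapArgs_diffs, hT, hT, hΦ, Function.comp_apply, h0,
      Equiv.swap_apply_left]
    simp only [smul_neg, neg_neg, smul_smul, diffs, inv_mul_cancel_right]
  · rw [swapAct_of_ne_zero hp, swapArgs_diffs, hT, hT, hΦ, Function.comp_apply,
      swap_castSucc_succ_zero_of_ne_zero hp, smul_neg, neg_neg]

def rightHomog (σ : (Fin n → G) → A) (x : Fin (n + 1) → G) : A :=
  (x 0)⁻¹ • σ (diffs x)

theorem rightHomog_mul_right (σ : (Fin n → G) → A) (x : Fin (n + 1) → G) (k : G) :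
    rightHomog σ (fun i => x i * k) = k⁻¹ • rightHomog σ x := by
  simp [rightHomog, diffs_mul_right, mul_smul]

theorem IsSymmCochain.rightHomog_swap {σ : (Fin n → G) → A} (hσ : IsSymmCochain σ)
    (p : Fin n) (x : Fin (n + 1) → G) :
    rightHomog σ (x ∘ Equiv.swap p.castSucc p.succ) = -rightHomog σ x := by
  simp only [rightHomog, Function.comp_apply, ← swapArgs_diffs]
  by_cases hp : (p : ℕ) = 0
  · have h0 : (0 : Fin (n + 1)) = p.castSucc := Fin.ext (by simp [hp])
    have key := congrArg ((diffs x p)⁻¹ • ·) (hσ p (diffs x))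
    simp only [swapAct_of_eq_zero hp, smul_neg, inv_smul_smul] at key
    rw [h0, Equiv.swap_apply_left, ← neg_eq_iff_eq_neg.mpr key, smul_neg, smul_smul, diffs]
    group
  · rw [swap_castSucc_succ_zero_of_ne_zero hp, hσ p (diffs x), swapAct_of_ne_zero hp,
      smul_neg, neg_neg]

theorem swapAct_extendByZero_coe (H : Subgroup G) (σ : (Fin n → H) → A) (p : Fin n)
    (h : Fin n → H) : swapAct p (extendByZero H σ) (fun i => (h i : G)) = swapAct p σ h := by
  by_cases hp : (p : ℕ) = 0
  · rw [swapAct_of_eq_zero hp, swapAct_of_eq_zero hp, swapArgs_coe, extendByZero_coe]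
    rfl
  · rw [swapAct_of_ne_zero hp, swapAct_of_ne_zero hp, swapArgs_coe, extendByZero_coe]

theorem IsSymmCochain.extendByZero {H : Subgroup G} {σ : (Fin n → H) → A}
    (hσ : IsSymmCochain σ) : IsSymmCochain (extendByZero H σ) := by
  intro p g
  by_cases hg : ∀ i, g i ∈ H
  · lift g to Fin n → H using hg
    rw [swapAct_extendByZero_coe, extendByZero_coe, hσ p g]
  · have hg' : ¬∀ i, swapArgs p g i ∈ H := fun h =>
      hg (by simpa [swapArgs_swapArgs] using swapArgs_mem h p)
    by_cases hp : (p : ℕ) = 0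
    · rw [swapAct_of_eq_zero hp, extendByZero_eq_zero σ hg, extendByZero_eq_zero σ hg',
        smul_zero, neg_zero]
    · rw [swapAct_of_ne_zero hp, extendByZero_eq_zero σ hg, extendByZero_eq_zero σ hg',
        neg_zero]

variable (H : Subgroup G) [Fintype (G ⧸ H)] (rep : G ⧸ H → G)

noncomputable def transferHomog (σ : (Fin n → H) → A) (x : Fin (n + 1) → G) : A :=
  ∑ c : G ⧸ H, rightHomog (extendByZero H σ) (fun i => (rep (x i • c))⁻¹ * x i)

theorem transferHomog_swap {σ : (Fin n → H) → A} (hσ : IsSymmCochain σ) (p : Fin n)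
    (x : Fin (n + 1) → G) :
    transferHomog H rep σ (x ∘ Equiv.swap p.castSucc p.succ) = -transferHomog H rep σ x := by
  simp only [transferHomog, ← Finset.sum_neg_distrib]
  exact Finset.sum_congr rfl fun c _ =>
    hσ.extendByZero.rightHomog_swap p (fun i => (rep (x i • c))⁻¹ * x i)

theorem transferHomog_mul_right (σ : (Fin n → H) → A) (x : Fin (n + 1) → G) (k : G) :
    transferHomog H rep σ (fun i => x i * k) = k⁻¹ • transferHomog H rep σ x := by
  simp only [transferHomog, mul_smul, ← mul_assoc, rightHomog_mul_right, Finset.smul_sum]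
  exact Equiv.sum_comp (MulAction.toPerm k)
    (fun c => k⁻¹ • rightHomog (extendByZero H σ) (fun i => (rep (x i • c))⁻¹ * x i))

theorem transferCochain_eq (hrep : ∀ c : G ⧸ H, (QuotientGroup.mk (rep c) : G ⧸ H) = c)
    (σ : (Fin n → H) → A) (g : Fin n → G) :
    transferCochain H rep hrep σ g = suffixProd g 0 • transferHomog H rep σ (suffixProd g) := by
  rw [transferHomog, Finset.smul_sum]
  refine Finset.sum_congr rfl fun c _ => ?_
  rw [rightHomog, smul_smul]
  simp only [suffixProd, Fin.val_zero, mul_inv_rev, inv_inv, mul_inv_cancel_left]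
  congr 1
  refine (extendByZero_coe H σ _).symm.trans (congrArg _ (funext fun i => ?_))
  simp only [diffs, Fin.val_castSucc, Fin.val_succ, prodFrom_succ g i i.isLt]
  group

theorem transferCochain_diffs (hrep : ∀ c : G ⧸ H, (QuotientGroup.mk (rep c) : G ⧸ H) = c)
    (σ : (Fin n → H) → A) (x : Fin (n + 1) → G) :
    transferCochain H rep hrep σ (diffs x) = x 0 • transferHomog H rep σ x := by
  rw [transferCochain_eq, suffixProd_diffs, transferHomog_mul_right, smul_smul, inv_inv,
    inv_mul_cancel_right]

end

theorem transferCochain_isSymmCochain_general [Group G] [AddCommGroup A]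
    [DistribMulAction G A] (H : Subgroup G) [Fintype (G ⧸ H)] (rep : G ⧸ H → G)
    (hrep : ∀ c : G ⧸ H, (QuotientGroup.mk (rep c) : G ⧸ H) = c)
    {n : ℕ} (σ : (Fin n → H) → A) (hσ : IsSymmCochain σ) :
    IsSymmCochain (transferCochain H rep hrep σ) :=
  isSymmCochain_of_diffs _ (transferHomog_swap H rep hσ) _ (transferCochain_diffs H rep hrep σ)

/-- If `σ` is a symmetric `n`-cochain on a finite-index subgroup `H ≤ G`, then
its transfer `tr_H^G(σ)(g₁,…,gₙ) = Σ_{c ∈ G/H} (x₁c)‾ • σ((x₁c)‾⁻¹g₁(x₂c)‾, …,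
(xₙc)‾⁻¹gₙc̄)` (for a chosen system of coset representatives with `H̄ = 1`) is a
symmetric `n`-cochain on `G`. -/
theorem transferCochain_isSymmCochain [Group G] [AddCommGroup A]
    [DistribMulAction G A] (H : Subgroup G) [Fintype (G ⧸ H)] (rep : G ⧸ H → G)
    (hrep : ∀ c : G ⧸ H, (QuotientGroup.mk (rep c) : G ⧸ H) = c)
    (hrep1 : rep (QuotientGroup.mk 1) = 1)
    {n : ℕ} (σ : (Fin n → H) → A) (hσ : IsSymmCochain σ) :
    IsSymmCochain (transferCochain H rep hrep σ) :=
  transferCochain_isSymmCochain_general H rep hrep σ hσ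
end

section
/- Let G be a group, H ≤ G of finite index, A a G-module, with fixed coset representatives for G/H. The transfer on cochains commutes with the differential: for every n-cochain σ : Hⁿ → A, tr_H^G(∂ⁿ_H σ) = ∂ⁿ_G(tr_H^G σ). -/
variable {G A : Type*}

/-!
Write `xᵢ = prodFrom g i`. The `c`-summand of the transfer evaluates `σ` at the `H`-tuple
`transferArg g c = ((xᵢc)‾⁻¹ gᵢ (xᵢ₊₁c)‾)ᵢ`, and the faces of this tuple are tuples of the same
kind: dropping the first entry gives the tuple of the tail of `g` at the same coset `c` (the
leading factor becomes `(x₀c)‾ (x₀c)‾⁻¹ g₀ (x₁c)‾ = g₀ (x₁c)‾`), merging entries `i` and `i+1`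
telescopes the middle representative away and gives the tuple of the `i`-th coface of `g`, and
dropping the last entry gives the tuple of the front part of `g` at the coset `gₙc`. Hence
`tr(∂σ)` and `∂(tr σ)` agree term by term, the last term after reindexing `G/H` by `c ↦ gₙc`.
-/

namespace TransferCochain

variable {G : Type*} [Group G]

theorem prodFrom_tail {n : ℕ} (g : Fin (n + 1) → G) (j : ℕ) :
    prodFrom (fun k : Fin n => g k.succ) j = prodFrom g (j + 1) := by
  rw [prodFrom, prodFrom, List.ofFn_succ, List.drop_succ_cons]

theorem prodFrom_init_mul {n : ℕ} (g : Fin (n + 1) → G) {j : ℕ} (hj : j ≤ n) :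
    prodFrom (fun k : Fin n => g k.castSucc) j * g (Fin.last n) = prodFrom g j := by
  rw [prodFrom, prodFrom, List.ofFn_succ', List.concat_eq_append,
    List.drop_append_of_le_length (by simpa using hj), List.prod_append, List.prod_singleton]

theorem prodFrom_coface_of_lt {n : ℕ} (g : Fin (n + 1) → G) (i : Fin n) {j : ℕ} (hij : i < j) :
    prodFrom (coface i g) j = prodFrom g (j + 1) := by
  refine congrArg List.prod (List.ext_getElem (by simp) fun k hk _ => ?_)
  simp only [List.getElem_drop, List.getElem_ofFn, coface]
  rw [if_neg (by rw [Fin.val_mk]; omega), if_neg (by rw [Fin.ext_iff, Fin.val_mk]; omega)]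
  congr 1
  ext
  simp only [Fin.val_succ]
  omega

theorem prodFrom_coface_of_le {n : ℕ} (g : Fin (n + 1) → G) (i : Fin n) {j : ℕ} (hji : j ≤ i) :
    prodFrom (coface i g) j = prodFrom g j := by
  induction hji using Nat.decreasingInduction with
  | self =>
    rw [prodFrom_succ _ i i.isLt, prodFrom_coface_of_lt g i (Nat.lt_succ_self i),
      prodFrom_succ g i (by omega), prodFrom_succ g (i + 1) (by omega), ← mul_assoc]
    simp only [coface, lt_irrefl, if_false, if_true]
    rfl
  | of_succ k hk ih =>
    rw [prodFrom_succ _ k (by omega), ih, prodFrom_succ g k (by omega)]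
    simp [coface, hk]

section Transfer

variable {A : Type*} [AddCommGroup A] [DistribMulAction G A] {H : Subgroup G}
  {rep : G ⧸ H → G} (hrep : ∀ c : G ⧸ H, (QuotientGroup.mk (rep c) : G ⧸ H) = c)

include hrep in
theorem rep_smul_inv_mul_rep_mem (x : G) (c : G ⧸ H) : (rep (x • c))⁻¹ * x * rep c ∈ H := by
  rw [mul_assoc, ← QuotientGroup.eq, hrep]
  exact congrArg (x • ·) (hrep c).symm

def transferArg {n : ℕ} (g : Fin n → G) (c : G ⧸ H) (i : Fin n) : H :=
  ⟨(rep (prodFrom g i • c))⁻¹ * g i * rep (prodFrom g (i + 1) • c), by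
    rw [prodFrom_succ g i i.isLt, mul_smul]
    exact rep_smul_inv_mul_rep_mem hrep _ _⟩

theorem transferCochain_apply [Fintype (G ⧸ H)] {n : ℕ} (σ : (Fin n → H) → A) (g : Fin n → G) :
    transferCochain H rep hrep σ g
      = ∑ c : G ⧸ H, rep (prodFrom g 0 • c) • σ (transferArg hrep g c) :=
  rfl

theorem rep_mul_transferArg {n : ℕ} (g : Fin n → G) (c : G ⧸ H) (i : Fin n) :
    rep (prodFrom g i • c) * transferArg hrep g c i = g i * rep (prodFrom g (i + 1) • c) := by
  simp [transferArg, mul_assoc]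

theorem transferArg_succ {n : ℕ} (g : Fin (n + 1) → G) (c : G ⧸ H) :
    (fun j : Fin n => transferArg hrep g c j.succ) = transferArg hrep (fun j => g j.succ) c := by
  funext j
  ext
  simp [transferArg, prodFrom_tail]

theorem transferArg_castSucc {n : ℕ} (g : Fin (n + 1) → G) (c : G ⧸ H) :
    (fun j : Fin n => transferArg hrep g c j.castSucc)
      = transferArg hrep (fun j => g j.castSucc) (g (Fin.last n) • c) := by
  funext j
  ext
  simp only [transferArg, ← mul_smul, prodFrom_init_mul g j.isLt.le, prodFrom_init_mul g j.isLt]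
  rfl

theorem coface_transferArg {n : ℕ} (g : Fin (n + 1) → G) (c : G ⧸ H) (i : Fin n) :
    coface i (transferArg hrep g c) = transferArg hrep (coface i g) c := by
  funext j
  ext
  rcases lt_trichotomy j i with hji | rfl | hij
  · simp [coface, transferArg, hji, prodFrom_coface_of_le g i hji.le,
      prodFrom_coface_of_le g i (Nat.succ_le_of_lt hji)]
  · simp [coface, transferArg, prodFrom_coface_of_le g j le_rfl,
      prodFrom_coface_of_lt g j (Nat.lt_succ_self j)]
    group
  · simp [coface, transferArg, hij.asymm, hij.ne', prodFrom_coface_of_lt g i hij,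
      prodFrom_coface_of_lt g i (Nat.lt_succ_of_lt hij)]

end Transfer

end TransferCochain

open TransferCochain in
theorem transferCochain_diff_general [Group G] [AddCommGroup A] [DistribMulAction G A]
    (H : Subgroup G) [Fintype (G ⧸ H)] (rep : G ⧸ H → G)
    (hrep : ∀ c : G ⧸ H, (QuotientGroup.mk (rep c) : G ⧸ H) = c)
    {n : ℕ} (σ : (Fin n → H) → A) :
    transferCochain H rep hrep (diff n σ) = diff n (transferCochain H rep hrep σ) := by
  funext g
  simp only [transferCochain_apply, diff, smul_add, Finset.sum_add_distrib, Finset.smul_sum]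
  congr 1
  congr 1
  · refine Finset.sum_congr rfl fun c _ => ?_
    have h0 : rep (prodFrom g 0 • c) * transferArg hrep g c 0 = g 0 * rep (prodFrom g 1 • c) :=
      rep_mul_transferArg hrep g c 0
    rw [Subgroup.smul_def, ← mul_smul, ← mul_smul, h0, transferArg_succ, prodFrom_tail]
  · rw [Finset.sum_comm]
    refine Finset.sum_congr rfl fun i _ => Finset.sum_congr rfl fun c _ => ?_
    rw [smul_comm, coface_transferArg, prodFrom_coface_of_le g i (Nat.zero_le _)]
  · refine Fintype.sum_equiv (MulAction.toPerm (g (Fin.last n))) _ _ fun c => ?_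
    rw [MulAction.toPerm_apply, smul_comm, ← transferArg_castSucc, ← mul_smul,
      prodFrom_init_mul g (Nat.zero_le n)]

/-- The transfer on cochains commutes with the differential: for a finite-index
subgroup `H ≤ G` with chosen coset representatives (`H̄ = 1`) and every
`n`-cochain `σ : Hⁿ → A`, one has `tr_H^G(∂ⁿ_H σ) = ∂ⁿ_G(tr_H^G σ)`. -/
theorem transferCochain_diff [Group G] [AddCommGroup A] [DistribMulAction G A]
    (H : Subgroup G) [Fintype (G ⧸ H)] (rep : G ⧸ H → G)
    (hrep : ∀ c : G ⧸ H, (QuotientGroup.mk (rep c) : G ⧸ H) = c)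
    (hrep1 : rep (QuotientGroup.mk 1) = 1)
    {n : ℕ} (σ : (Fin n → H) → A) :
    transferCochain H rep hrep (diff n σ) = diff n (transferCochain H rep hrep σ) :=
  transferCochain_diff_general H rep hrep σ
end
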